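/- arXiv:2602.00992 — 4 statements merged into one kernel-verified Lean document; each statement's English description precedes it below -/
import Mathlib

section
/- Let F : E × E → E be a coordinate retraction family that is C² on a neighborhood of (0, 0). Then there exist constants C > 0 and ε > 0 such that for all u, v ∈ E with ‖u‖ ≤ ε, ‖v‖ ≤ ε and F(−u, v) = u, one has ‖F(−u, v/2)‖ ≤ C‖u‖². (That is, the coordinate δ of the retraction midpoint, constructed by pulling q_y back to the tangent space at q_x via the inverse retraction, halving, and retracting, approximates the true geodesic midpoint — the origin of the normal coordinate chart — with second-order accuracy in the separation.) -/
/-! Put `R (z, w) = F (z, w) - z - w`. Since `F (z, 0) = z` and `∂₂F (0, 0) = id`, a Taylor estimate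
with Lipschitz derivative gives `‖R (z, w)‖ ≤ L ‖w‖ (‖w‖ + ‖z‖)` near the origin. Applied to
`F (-u, v) = u`, it shows that the defect `2u - v = R (-u, v)` is `O(‖u‖²)`, in particular
`‖v‖ ≤ 3 ‖u‖`; hence `F (-u, v/2) = R (-u, v/2) - (2u - v)/2` is `O(‖u‖²)` as well. -/

open scoped NNReal Topology

section

variable {E G : Type*} [NormedAddCommGroup E] [NormedSpace ℝ E]
  [NormedAddCommGroup G] [NormedSpace ℝ G]

theorem Convex.norm_image_sub_sub_fderiv_le_of_lipschitzOnWith {f : E → G} {s : Set E}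
    {K : ℝ≥0} (hs : Convex ℝ s) (hf : ∀ x ∈ s, DifferentiableAt ℝ f x)
    (hlip : LipschitzOnWith K (fderiv ℝ f) s) {x y : E} (hx : x ∈ s) (hy : y ∈ s) :
    ‖f y - f x - fderiv ℝ f x (y - x)‖ ≤ K * ‖y - x‖ ^ 2 := by
  have hseg := hs.segment_subset hx hy
  have bound : ∀ p ∈ segment ℝ x y, ‖fderiv ℝ f p - fderiv ℝ f x‖ ≤ K * ‖y - x‖ := by
    intro p hp
    calc ‖fderiv ℝ f p - fderiv ℝ f x‖ ≤ K * ‖p - x‖ := by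
          simpa only [dist_eq_norm] using hlip.dist_le_mul p (hseg hp) x hx
      _ ≤ K * ‖y - x‖ := by gcongr; exact norm_sub_le_of_mem_segment hp
  calc ‖f y - f x - fderiv ℝ f x (y - x)‖ ≤ K * ‖y - x‖ * ‖y - x‖ :=
        (convex_segment x y).norm_image_sub_le_of_norm_fderiv_le' (fun p hp => hf p (hseg hp))
          bound (left_mem_segment ℝ x y) (right_mem_segment ℝ x y)
    _ = K * ‖y - x‖ ^ 2 := by ring

theorem fderiv_prodMk_right_eq_comp_inr {𝕜 E E' G : Type*} [NontriviallyNormedField 𝕜]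
    [NormedAddCommGroup E] [NormedSpace 𝕜 E] [NormedAddCommGroup E'] [NormedSpace 𝕜 E']
    [NormedAddCommGroup G] [NormedSpace 𝕜 G] {F : E × E' → G} {x : E} {y : E'}
    (hF : DifferentiableAt 𝕜 F (x, y)) :
    fderiv 𝕜 (fun ζ => F (x, ζ)) y = (fderiv 𝕜 F (x, y)).comp (ContinuousLinearMap.inr 𝕜 E E') :=
  (hF.hasFDerivAt.comp y (hasFDerivAt_prodMk_right x y)).fderiv

theorem exists_norm_retraction_sub_sub_le {F : E × E → E} (hF : ContDiffAt ℝ 2 F (0, 0))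
    (hF0 : ∀ᶠ z in 𝓝 (0 : E), F (z, 0) = z)
    (hFid : fderiv ℝ (fun ζ : E => F (0, ζ)) 0 = ContinuousLinearMap.id ℝ E) :
    ∃ L > 0, ∃ r > 0, ∀ z w : E, ‖z‖ ≤ r → ‖w‖ ≤ r →
      ‖F (z, w) - z - w‖ ≤ L * ‖w‖ * (‖w‖ + ‖z‖) := by
  obtain ⟨K, t, ht, hlip⟩ := (hF.fderiv_right (m := 1) (by norm_num)).exists_lipschitzOnWith
  have hdiff : ∀ᶠ p in 𝓝 ((0 : E), (0 : E)), DifferentiableAt ℝ F p :=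
    (hF.eventually (by simp)).mono fun p hp => hp.differentiableAt (by norm_num)
  have hF0' : ∀ᶠ p : E × E in 𝓝 (0, 0), F (p.1, 0) = p.1 :=
    (continuous_fst.tendsto (0, 0)).eventually hF0
  obtain ⟨r, hr, hball⟩ :=
    Metric.nhds_basis_closedBall.mem_iff.1 (Filter.inter_mem ht (hdiff.and hF0'))
  have hmem : ∀ z w : E, ‖z‖ ≤ r → ‖w‖ ≤ r → ((z, w) : E × E) ∈ Metric.closedBall (0, 0) r :=
    fun z w hz hw => by simpa [← Prod.zero_eq_mk] using max_le hz hw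
  refine ⟨K + 1, by positivity, r, hr, fun z w hz hw => ?_⟩
  have h00 := hmem 0 0 (by simpa using hr.le) (by simpa using hr.le)
  have hz0 := hmem z 0 hz (by simpa using hr.le)
  have hDF0 : fderiv ℝ F (0, 0) (0, w) = w := by
    simpa [fderiv_prodMk_right_eq_comp_inr (hball h00).2.1] using congrArg (· w) hFid
  have hzw := hmem z w hz hw
  have htaylor := (convex_closedBall _ _).norm_image_sub_sub_fderiv_le_of_lipschitzOnWith
    (fun p hp => (hball hp).2.1) (hlip.mono fun p hp => (hball hp).1) hz0 hzw
  rw [(hball hz0).2.2, Prod.mk_sub_mk, sub_self, sub_zero, Prod.norm_mk, norm_zero,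
    max_eq_right (norm_nonneg w)] at htaylor
  have hlin : ‖(fderiv ℝ F (z, 0) - fderiv ℝ F (0, 0)) (0, w)‖ ≤ K * ‖z‖ * ‖w‖ :=
    calc ‖(fderiv ℝ F (z, 0) - fderiv ℝ F (0, 0)) (0, w)‖
        ≤ ‖fderiv ℝ F (z, 0) - fderiv ℝ F (0, 0)‖ * ‖((0 : E), w)‖ :=
          ContinuousLinearMap.le_opNorm _ _
      _ ≤ K * ‖z‖ * ‖w‖ := by
        gcongr
        · simpa [dist_eq_norm] using hlip.dist_le_mul _ (hball hz0).1 _ (hball h00).1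
        · simp
  calc ‖F (z, w) - z - w‖
      = ‖(F (z, w) - z - fderiv ℝ F (z, 0) (0, w))
          + (fderiv ℝ F (z, 0) - fderiv ℝ F (0, 0)) (0, w)‖ := by
        rw [sub_apply, hDF0]; abel_nf
    _ ≤ K * ‖w‖ ^ 2 + K * ‖z‖ * ‖w‖ := (norm_add_le _ _).trans (add_le_add htaylor hlin)
    _ ≤ (K + 1) * ‖w‖ * (‖w‖ + ‖z‖) := by
        nlinarith [mul_nonneg (norm_nonneg w) (add_nonneg (norm_nonneg w) (norm_nonneg z))]

theorem norm_retraction_midpoint_le {F : E × E → E} {L r : ℝ} (hL : 0 ≤ L)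
    (hrem : ∀ z w : E, ‖z‖ ≤ r → ‖w‖ ≤ r → ‖F (z, w) - z - w‖ ≤ L * ‖w‖ * (‖w‖ + ‖z‖))
    {u v : E} (hu : ‖u‖ ≤ r) (hv : ‖v‖ ≤ r) (hvL : L * ‖v‖ ≤ 1 / 4)
    (huv : F (-u, v) = u) :
    ‖F (-u, (1 / 2 : ℝ) • v)‖ ≤ 10 * L * ‖u‖ ^ 2 := by
  have hdefect : ‖(2 : ℝ) • u - v‖ ≤ L * ‖v‖ * (‖v‖ + ‖u‖) := by
    have h := hrem (-u) v (by rwa [norm_neg]) hv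
    rwa [huv, norm_neg, sub_neg_eq_add, ← two_smul ℝ] at h
  have hv3 : ‖v‖ ≤ 3 * ‖u‖ := by
    have h := norm_le_norm_add_norm_sub' v ((2 : ℝ) • u)
    rw [norm_sub_rev, norm_smul, Real.norm_two] at h
    nlinarith [norm_nonneg u, norm_nonneg v]
  have hhalf : ‖(1 / 2 : ℝ) • v‖ = ‖v‖ / 2 := by
    rw [norm_smul, Real.norm_of_nonneg (by norm_num)]; ring
  have hsecond := hrem (-u) ((1 / 2 : ℝ) • v) (by rwa [norm_neg])
    (by rw [hhalf]; linarith [norm_nonneg v])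
  rw [hhalf, norm_neg] at hsecond
  have hsplit : F (-u, (1 / 2 : ℝ) • v)
      = (F (-u, (1 / 2 : ℝ) • v) - -u - (1 / 2 : ℝ) • v) - (1 / 2 : ℝ) • ((2 : ℝ) • u - v) := by
    rw [smul_sub, smul_smul]; norm_num
  calc ‖F (-u, (1 / 2 : ℝ) • v)‖
      = ‖(F (-u, (1 / 2 : ℝ) • v) - -u - (1 / 2 : ℝ) • v) - (1 / 2 : ℝ) • ((2 : ℝ) • u - v)‖ :=
        congrArg norm hsplit
    _ ≤ ‖F (-u, (1 / 2 : ℝ) • v) - -u - (1 / 2 : ℝ) • v‖ + ‖(1 / 2 : ℝ) • ((2 : ℝ) • u - v)‖ :=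
        norm_sub_le _ _
    _ ≤ L * (‖v‖ / 2) * (‖v‖ / 2 + ‖u‖) + 1 / 2 * (L * ‖v‖ * (‖v‖ + ‖u‖)) := by
        rw [norm_smul, Real.norm_of_nonneg (by norm_num)]; gcongr
    _ ≤ 10 * L * ‖u‖ ^ 2 := by
        have := mul_le_mul_of_nonneg_left hv3 hL
        nlinarith [norm_nonneg u, norm_nonneg v, mul_nonneg hL (norm_nonneg u)]

end

theorem retraction_midpoint_second_order_accuracy_general
    {E : Type*} [NormedAddCommGroup E] [InnerProductSpace ℝ E]
    (F : E × E → E)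
    (hF : ContDiffAt ℝ 2 F (0, 0))
    (hF0 : ∀ᶠ z in nhds (0 : E), F (z, 0) = z)
    (hFid : fderiv ℝ (fun ζ : E => F (0, ζ)) 0 = ContinuousLinearMap.id ℝ E) :
    ∃ C > 0, ∃ ε > 0, ∀ u v : E, ‖u‖ ≤ ε → ‖v‖ ≤ ε → F (-u, v) = u →
      ‖F (-u, (1 / 2 : ℝ) • v)‖ ≤ C * ‖u‖ ^ 2 := by
  obtain ⟨L, hL, r, hr, hrem⟩ := exists_norm_retraction_sub_sub_le hF hF0 hFid
  refine ⟨10 * L, by positivity, min r (1 / (4 * L)), by positivity, fun u v hu hv huv => ?_⟩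
  have hvL : L * ‖v‖ ≤ 1 / 4 := by
    calc L * ‖v‖ ≤ L * (1 / (4 * L)) := by gcongr; exact hv.trans (min_le_right _ _)
      _ = 1 / 4 := by field_simp
  exact norm_retraction_midpoint_le hL.le hrem (hu.trans (min_le_left _ _))
    (hv.trans (min_le_left _ _)) hvL huv

/-- **Second-order accuracy of the retraction midpoint (Lemma 2 of the paper).**
In Riemann normal coordinates centred at the geodesic midpoint, the configurations `q_x, q_y`
have coordinates `-u, u` and the geodesic midpoint is the origin.  If `F` is a coordinate
retraction family that is `C²` near `(0, 0)`, `v` is the inverse retraction of `q_y` at `q_x`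
(i.e. `F (-u, v) = u`), then the retraction midpoint `δ = F (-u, v/2)` satisfies
`‖δ‖ ≤ C ‖u‖²` for all small `u, v`. -/
theorem retraction_midpoint_second_order_accuracy
    {E : Type*} [NormedAddCommGroup E] [InnerProductSpace ℝ E] [FiniteDimensional ℝ E]
    (F : E × E → E)
    (hF : ContDiffAt ℝ 2 F (0, 0))
    (hF0 : ∀ᶠ z in nhds (0 : E), F (z, 0) = z)
    (hFid : fderiv ℝ (fun ζ : E => F (0, ζ)) 0 = ContinuousLinearMap.id ℝ E) :
    ∃ C > 0, ∃ ε > 0, ∀ u v : E, ‖u‖ ≤ ε → ‖v‖ ≤ ε → F (-u, v) = u →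
      ‖F (-u, (1 / 2 : ℝ) • v)‖ ≤ C * ‖u‖ ^ 2 :=
  retraction_midpoint_second_order_accuracy_general F hF hF0 hFid
end

section
/- Let F : E × E → E be a coordinate retraction family that is C³ on a neighborhood of (0, 0). Then for every K > 0 there exist constants C > 0 and ε > 0 such that for all u, δ, w_y, w_x ∈ E with ‖u‖ ≤ ε, ‖δ‖ ≤ K‖u‖², ‖w_y‖ ≤ ε, ‖w_x‖ ≤ ε satisfying F(δ, w_y) = u and F(δ, w_x) = −u, one has ‖(w_y − w_x) − 2u‖ ≤ C‖u‖³. (That is, the difference of the inverse retractions of q_y and q_x taken at the retraction midpoint equals 2u up to a third-order error: the first- and second-order distortion terms of the retraction cancel.) -/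
open Metric Filter ContinuousLinearMap

set_option maxHeartbeats 1600000

/-- Second-order expansion of a coordinate retraction family: near `(0,0)`,
`F (z, w) = z + w + ½ Λ w w + O(‖z‖‖w‖ + ‖w‖³)` where `Λ` is a symmetric bilinear map. -/
lemma key_expansion {E : Type*} [NormedAddCommGroup E] [NormedSpace ℝ E] (F : E × E → E)
    (hF : ContDiffAt ℝ 3 F (0, 0))
    (hF0 : ∀ᶠ z in nhds (0 : E), F (z, 0) = z)
    (hFid : fderiv ℝ (fun ζ : E => F (0, ζ)) 0 = ContinuousLinearMap.id ℝ E) :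
    ∃ Λ : E →L[ℝ] E →L[ℝ] E, (∀ a b, Λ a b = Λ b a) ∧
      ∃ C₀ > (0:ℝ), ∃ r > (0:ℝ), ∀ z w : E, ‖z‖ ≤ r → ‖w‖ ≤ r →
        ‖F (z, w) - z - w - (1/2 : ℝ) • Λ w w‖ ≤ C₀ * (‖z‖ * ‖w‖ + ‖w‖ ^ 3) := by
  set f' := fderiv ℝ F with hf'def
  set f'' := fderiv ℝ f' with hf''def
  set ι : E →L[ℝ] E × E := ContinuousLinearMap.inr ℝ E E with hιdef
  have hιap : ∀ v : E, ι v = (0, v) := fun v => rfl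
  have hινorm : ∀ v : E, ‖ι v‖ = ‖v‖ := by
    intro v; rw [hιap]; simp [Prod.norm_def]
  have hι : ‖ι‖ ≤ 1 :=
    opNorm_le_bound _ zero_le_one (fun v => by rw [hινorm, one_mul])
  set Jc : ((E × E) →L[ℝ] E) →L[ℝ] (E →L[ℝ] E) :=
    (ContinuousLinearMap.compL ℝ E (E × E) E).flip ι with hJdef
  have hJap : ∀ T : (E × E) →L[ℝ] E, Jc T = T.comp ι := fun T => rfl
  -- the symmetric bilinear form
  set Λ : E →L[ℝ] E →L[ℝ] E := Jc.comp ((f'' (0, 0)).comp ι) with hΛdef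
  have hΛap : ∀ a b : E, Λ a b = f'' (0, 0) (0, a) (0, b) := fun a b => rfl
  have hsymQ : ∀ v w : E × E, f'' (0,0) v w = f'' (0,0) w v :=
    hF.isSymmSndFDerivAt (by norm_num)
  have hsym : ∀ a b : E, Λ a b = Λ b a := by
    intro a b; rw [hΛap, hΛap]; exact hsymQ _ _
  refine ⟨Λ, hsym, ?_⟩
  -- regularity data
  have h1 : ContDiffAt ℝ 2 f' (0,0) := hF.fderiv_right (by norm_num)
  have h2 : ContDiffAt ℝ 1 f'' (0,0) := h1.fderiv_right (by norm_num)
  obtain ⟨L₁, t₁, ht₁, hlip₁⟩ := (h1.of_le one_le_two).exists_lipschitzOnWith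
  obtain ⟨L₂, t₂, ht₂, hlip₂⟩ := h2.exists_lipschitzOnWith
  have hev : ∀ᶠ p : E × E in nhds (0,0),
      (HasFDerivAt F (f' p) p ∧ HasFDerivAt f' (f'' p) p) ∧ (p ∈ t₁ ∧ p ∈ t₂) := by
    filter_upwards [hF.eventually (by simp), h1.eventually (by simp), ht₁, ht₂]
      with p hp hp1 hm1 hm2
    exact ⟨⟨(hp.differentiableAt (by norm_num)).hasFDerivAt,
      (hp1.differentiableAt (by norm_num)).hasFDerivAt⟩, hm1, hm2⟩
  obtain ⟨r₁, hr₁pos, hr₁⟩ := Metric.eventually_nhds_iff.mp hev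
  obtain ⟨r₀, hr₀pos, hr₀⟩ := Metric.eventually_nhds_iff.mp hF0
  set r : ℝ := min r₀ r₁ / 2 with hrdef
  have hminpos : 0 < min r₀ r₁ := lt_min hr₀pos hr₁pos
  have hrpos : 0 < r := by positivity
  have hrr₀ : r < r₀ := lt_of_lt_of_le (half_lt_self hminpos) (min_le_left _ _)
  have hrr₁ : r < r₁ := lt_of_lt_of_le (half_lt_self hminpos) (min_le_right _ _)
  -- distance computations in the product
  have hdist : ∀ (z w : E), dist (z, w) ((0,0) : E × E) = max ‖z‖ ‖w‖ := by
    intro z w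
    rw [dist_eq_norm]
    simp [Prod.norm_def]
  refine ⟨(L₁ : ℝ) + (L₂ : ℝ) * r + (L₂ : ℝ) + 1, by positivity, r, hrpos, ?_⟩
  intro z w hz hw
  -- membership facts
  have hmem : ∀ w₀ : E, ‖w₀‖ ≤ ‖w‖ → dist ((z, w₀) : E × E) ((0,0)) < r₁ := by
    intro w₀ hw₀
    rw [hdist]
    exact lt_of_le_of_lt (max_le hz (hw₀.trans hw)) hrr₁
  have h00 : dist ((0,0) : E × E) ((0,0)) < r₁ := by
    rw [show ((0,0) : E × E) = ((0:E), (0:E)) from rfl, hdist]; simpa using hr₁pos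
  have hz0 : dist ((z, (0:E)) : E × E) ((0,0)) < r₁ := hmem 0 (by simp)
  -- Lipschitz bound for f' between (z,0) and (0,0)
  have hL₁ : ‖f' (z, 0) - f' (0, 0)‖ ≤ (L₁ : ℝ) * ‖z‖ := by
    have := (hlip₁.dist_le_mul _ (hr₁ hz0).2.1 _ (hr₁ h00).2.1)
    rw [dist_eq_norm, hdist] at this
    simpa using this
  -- Lipschitz bound for f''
  have hL₂ : ∀ w₀ : E, ‖w₀‖ ≤ ‖w‖ →
      ‖f'' (z, w₀) - f'' (0, 0)‖ ≤ (L₂ : ℝ) * (‖z‖ + ‖w‖) := by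
    intro w₀ hw₀
    have := (hlip₂.dist_le_mul _ (hr₁ (hmem w₀ hw₀)).2.2 _ (hr₁ h00).2.2)
    rw [dist_eq_norm, hdist] at this
    refine this.trans ?_
    have h1 : max ‖z‖ ‖w₀‖ ≤ ‖z‖ + ‖w‖ :=
      max_le (by linarith [norm_nonneg w]) (by linarith [norm_nonneg z, hw₀])
    exact mul_le_mul_of_nonneg_left h1 L₂.coe_nonneg
  -- pointwise differential facts
  have hd1 : ∀ w₀ : E, ‖w₀‖ ≤ ‖w‖ → HasFDerivAt F (f' (z, w₀)) (z, w₀) :=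
    fun w₀ h => (hr₁ (hmem w₀ h)).1.1
  have hd2 : ∀ w₀ : E, ‖w₀‖ ≤ ‖w‖ → HasFDerivAt f' (f'' (z, w₀)) (z, w₀) :=
    fun w₀ h => (hr₁ (hmem w₀ h)).1.2
  have hd00 : HasFDerivAt F (f' (0,0)) ((0,0) : E × E) := (hr₁ h00).1.1
  -- identity of the partial derivative at the origin
  have hid : (f' (0, 0)).comp ι = ContinuousLinearMap.id ℝ E := by
    have hmk : HasFDerivAt (fun ζ : E => ((0 : E), ζ)) ι 0 :=
      hasFDerivAt_prodMk_right (0:E) (0:E)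
    have h1 : HasFDerivAt (fun ζ : E => F (0, ζ)) ((f' (0,0)).comp ι) 0 := hd00.comp 0 hmk
    rw [← h1.fderiv]; exact hFid
  -- the convex set on which we apply the mean value inequality
  set s : Set E := closedBall (0:E) ‖w‖ with hsdef
  have hconv : Convex ℝ s := convex_closedBall _ _
  have hmem_s : ∀ w₀ ∈ s, ‖w₀‖ ≤ ‖w‖ := by
    intro w₀ h
    simpa [hsdef, dist_eq_norm] using h
  have h0s : (0:E) ∈ s := mem_closedBall_self (norm_nonneg w)
  have hws : w ∈ s := by simp [hsdef]
  -- the operator-valued function N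
  set N : E → (E →L[ℝ] E) := fun w' => Jc (f' (z, w')) - Λ w' with hNdef
  have hNderiv : ∀ w₀ ∈ s, HasFDerivWithinAt N
      (Jc.comp (((f'' (z, w₀)) - f'' (0,0)).comp ι)) s w₀ := by
    intro w₀ hw₀
    have hmk : HasFDerivAt (fun w' : E => (z, w')) ι w₀ := hasFDerivAt_prodMk_right z w₀
    have hB : HasFDerivAt (fun w' : E => f' (z, w')) ((f'' (z, w₀)).comp ι) w₀ :=
      (hd2 w₀ (hmem_s w₀ hw₀)).comp w₀ hmk
    have hC : HasFDerivAt (fun w' : E => Jc (f' (z, w'))) (Jc.comp ((f'' (z, w₀)).comp ι)) w₀ :=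
      Jc.hasFDerivAt.comp w₀ hB
    have hD : HasFDerivAt N (Jc.comp ((f'' (z, w₀)).comp ι) - Λ) w₀ := hC.sub Λ.hasFDerivAt
    have heq : Jc.comp ((f'' (z, w₀)).comp ι) - Λ
        = Jc.comp (((f'' (z, w₀)) - f'' (0,0)).comp ι) := by
      rw [hΛdef, ContinuousLinearMap.sub_comp, ContinuousLinearMap.comp_sub]
    rw [heq] at hD
    exact hD.hasFDerivWithinAt
  have hNbound : ∀ w₀ ∈ s,
      ‖Jc.comp (((f'' (z, w₀)) - f'' (0,0)).comp ι)‖ ≤ (L₂:ℝ) * (‖z‖ + ‖w‖) := by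
    intro w₀ hw₀
    refine opNorm_le_bound _ (by positivity) fun v => ?_
    have hstep : (Jc.comp (((f'' (z, w₀)) - f'' (0,0)).comp ι)) v
        = ((f'' (z, w₀) - f'' (0,0)) (ι v)).comp ι := rfl
    rw [hstep]
    calc ‖((f'' (z, w₀) - f'' (0,0)) (ι v)).comp ι‖
        ≤ ‖(f'' (z, w₀) - f'' (0,0)) (ι v)‖ * ‖ι‖ := opNorm_comp_le _ _
      _ ≤ ‖(f'' (z, w₀) - f'' (0,0)) (ι v)‖ := mul_le_of_le_one_right (norm_nonneg _) hι
      _ ≤ ‖f'' (z, w₀) - f'' (0,0)‖ * ‖ι v‖ := le_opNorm _ _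
      _ = ‖f'' (z, w₀) - f'' (0,0)‖ * ‖v‖ := by rw [hινorm]
      _ ≤ ((L₂:ℝ) * (‖z‖ + ‖w‖)) * ‖v‖ :=
          mul_le_mul_of_nonneg_right (hL₂ w₀ (hmem_s w₀ hw₀)) (norm_nonneg v)
  have hNdiff : ∀ w₀ ∈ s, ‖N w₀ - N 0‖ ≤ (L₂:ℝ) * (‖z‖ + ‖w‖) * ‖w₀‖ := by
    intro w₀ hw₀
    have := hconv.norm_image_sub_le_of_norm_hasFDerivWithin_le hNderiv hNbound h0s hw₀
    simpa using this
  -- derivative of the full remainder function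
  have hgd : ∀ w₀ ∈ s, HasFDerivWithinAt
      (fun w' : E => F (z, w') - z - w' - (1/2:ℝ) • Λ w' w')
      ((N w₀ - N 0) + (Jc (f' (z, 0)) - ContinuousLinearMap.id ℝ E)) s w₀ := by
    intro w₀ hw₀
    have hmk : HasFDerivAt (fun w' : E => (z, w')) ι w₀ := hasFDerivAt_prodMk_right z w₀
    have h1 : HasFDerivAt (fun w' : E => F (z, w')) ((f' (z, w₀)).comp ι) w₀ :=
      (hd1 w₀ (hmem_s w₀ hw₀)).comp w₀ hmk
    have hq : HasFDerivAt (fun w' : E => Λ w' w')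
        ((Λ w₀).comp (ContinuousLinearMap.id ℝ E) + Λ.flip w₀) w₀ :=
      (Λ.hasFDerivAt (x := w₀)).clm_apply (hasFDerivAt_id w₀)
    have htot : HasFDerivAt (fun w' : E => F (z, w') - z - w' - (1/2:ℝ) • Λ w' w')
        ((f' (z, w₀)).comp ι - ContinuousLinearMap.id ℝ E -
          (1/2:ℝ) • ((Λ w₀).comp (ContinuousLinearMap.id ℝ E) + Λ.flip w₀)) w₀ :=
      ((h1.sub_const z).sub (hasFDerivAt_id w₀)).sub (hq.const_smul (1/2:ℝ))
    have heq : (f' (z, w₀)).comp ι - ContinuousLinearMap.id ℝ E -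
          (1/2:ℝ) • ((Λ w₀).comp (ContinuousLinearMap.id ℝ E) + Λ.flip w₀)
        = (N w₀ - N 0) + (Jc (f' (z, 0)) - ContinuousLinearMap.id ℝ E) := by
      ext v
      have hsv : Λ v w₀ = Λ w₀ v := hsym v w₀
      simp only [ContinuousLinearMap.sub_apply, ContinuousLinearMap.add_apply,
        ContinuousLinearMap.smul_apply, ContinuousLinearMap.comp_apply,
        ContinuousLinearMap.coe_id', id_eq, ContinuousLinearMap.prod_apply, hNdef, hJap,
        ContinuousLinearMap.map_zero, ContinuousLinearMap.zero_apply,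
        ContinuousLinearMap.flip_apply, hsv, smul_add]
      module
    rw [heq] at htot
    exact htot.hasFDerivWithinAt
  have hgbound : ∀ w₀ ∈ s,
      ‖(N w₀ - N 0) + (Jc (f' (z, 0)) - ContinuousLinearMap.id ℝ E)‖
        ≤ (L₂:ℝ) * (‖z‖ + ‖w‖) * ‖w‖ + (L₁:ℝ) * ‖z‖ := by
    intro w₀ hw₀
    have h2 : ‖Jc (f' (z, 0)) - ContinuousLinearMap.id ℝ E‖ ≤ (L₁:ℝ) * ‖z‖ := by
      rw [hJap, ← hid, ← ContinuousLinearMap.sub_comp]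
      calc ‖(f' (z,0) - f' (0,0)).comp ι‖
          ≤ ‖f' (z,0) - f' (0,0)‖ * ‖ι‖ := opNorm_comp_le _ _
        _ ≤ ‖f' (z,0) - f' (0,0)‖ := mul_le_of_le_one_right (norm_nonneg _) hι
        _ ≤ (L₁:ℝ) * ‖z‖ := hL₁
    have h3 : (L₂:ℝ) * (‖z‖ + ‖w‖) * ‖w₀‖ ≤ (L₂:ℝ) * (‖z‖ + ‖w‖) * ‖w‖ :=
      mul_le_mul_of_nonneg_left (hmem_s w₀ hw₀) (by positivity)
    calc ‖(N w₀ - N 0) + (Jc (f' (z, 0)) - ContinuousLinearMap.id ℝ E)‖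
        ≤ ‖N w₀ - N 0‖ + ‖Jc (f' (z, 0)) - ContinuousLinearMap.id ℝ E‖ := norm_add_le _ _
      _ ≤ (L₂:ℝ) * (‖z‖ + ‖w‖) * ‖w‖ + (L₁:ℝ) * ‖z‖ := by
          have := hNdiff w₀ hw₀; linarith
  -- mean value inequality for the remainder
  have hgmv := hconv.norm_image_sub_le_of_norm_hasFDerivWithin_le hgd hgbound h0s hws
  have hgz : F (z, (0:E)) = z := by
    refine hr₀ ?_
    rw [dist_zero_right]
    exact lt_of_le_of_lt hz hrr₀
  simp only [hgz, sub_zero, sub_self, map_zero, ContinuousLinearMap.zero_apply, smul_zero,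
    zero_sub, norm_neg, sub_zero] at hgmv
  -- hgmv should now read ‖F (z,w) - z - w - ½ • Λ w w - 0‖ ≤ ... * ‖w‖ (up to simp normal form)
  have hfin : ‖F (z, w) - z - w - (1/2:ℝ) • Λ w w‖
      ≤ ((L₂:ℝ) * (‖z‖ + ‖w‖) * ‖w‖ + (L₁:ℝ) * ‖z‖) * ‖w‖ := by
    simpa using hgmv
  refine hfin.trans ?_
  have hzw : (L₂:ℝ) * ‖z‖ * ‖w‖^2 ≤ (L₂:ℝ) * r * (‖z‖ * ‖w‖) := by
    have h0 : ‖w‖ * ‖w‖ ≤ r * ‖w‖ := mul_le_mul_of_nonneg_right hw (norm_nonneg w)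
    have h1 : ‖z‖ * (‖w‖ * ‖w‖) ≤ ‖z‖ * (r * ‖w‖) :=
      mul_le_mul_of_nonneg_left h0 (norm_nonneg z)
    nlinarith only [h1, L₂.coe_nonneg, mul_nonneg (norm_nonneg z) (mul_nonneg (norm_nonneg w) (norm_nonneg w))]
  nlinarith only [hzw, mul_nonneg L₁.coe_nonneg (pow_nonneg (norm_nonneg w) 3),
    mul_nonneg (mul_nonneg L₂.coe_nonneg hrpos.le) (pow_nonneg (norm_nonneg w) 3),
    mul_nonneg (mul_nonneg L₂.coe_nonneg (norm_nonneg z)) (norm_nonneg w),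
    mul_nonneg (norm_nonneg z) (norm_nonneg w), pow_nonneg (norm_nonneg w) 3,
    mul_nonneg L₂.coe_nonneg (pow_nonneg (norm_nonneg w) 3)]

/-- **Cancellation of second-order distortion (Lemma 3 of the paper).**
If `F` is a coordinate retraction family that is `C³` near `(0, 0)`, `δ` is a base point with
`‖δ‖ ≤ K ‖u‖²` (the retraction midpoint), and `w_y, w_x` are the inverse retractions at `δ`
of the points with normal coordinates `u` and `-u` respectively, then the difference
`w_y - w_x` equals `2u` up to a third-order error: `‖(w_y - w_x) - 2u‖ ≤ C ‖u‖³`. -/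
theorem inverse_retraction_difference_third_order
    {E : Type*} [NormedAddCommGroup E] [InnerProductSpace ℝ E] [FiniteDimensional ℝ E]
    (F : E × E → E)
    (hF : ContDiffAt ℝ 3 F (0, 0))
    (hF0 : ∀ᶠ z in nhds (0 : E), F (z, 0) = z)
    (hFid : fderiv ℝ (fun ζ : E => F (0, ζ)) 0 = ContinuousLinearMap.id ℝ E) :
    ∀ K > 0, ∃ C > 0, ∃ ε > 0, ∀ u δ w_y w_x : E,
      ‖u‖ ≤ ε → ‖δ‖ ≤ K * ‖u‖ ^ 2 → ‖w_y‖ ≤ ε → ‖w_x‖ ≤ ε →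
      F (δ, w_y) = u → F (δ, w_x) = -u →
      ‖(w_y - w_x) - (2 : ℝ) • u‖ ≤ C * ‖u‖ ^ 3 := by
  obtain ⟨Λ, hsym, C₀, hC₀, r, hrpos, hkey⟩ := key_expansion F hF hF0 hFid
  intro K hK
  set Mq : ℝ := ‖Λ‖ with hMqdef
  have hMq0 : (0:ℝ) ≤ Mq := by rw [hMqdef]; exact norm_nonneg Λ
  set D : ℝ := Mq + 2*C₀ + 1 with hDdef
  have hDpos : (0:ℝ) < D := by positivity
  set C₂ : ℝ := 2*K + 16*Mq + 8*C₀*K + 128*C₀ with hC₂def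
  have hC₂0 : (0:ℝ) ≤ C₂ := by positivity
  refine ⟨(8*C₀*K + 128*C₀ + 4*Mq*C₂) + 1, by positivity,
    min r (min (1/(K+1)) (1/(2*D))), by positivity, ?_⟩
  intro u δ w_y w_x hu hδ hwy hwx hy hx
  set ε : ℝ := min r (min (1/(K+1)) (1/(2*D))) with hεdef
  have hεpos : (0:ℝ) < ε := by positivity
  set a : ℝ := ‖u‖ with hadef
  have ha0 : (0:ℝ) ≤ a := norm_nonneg u
  have hεr : ε ≤ r := min_le_left _ _
  have hεK : ε ≤ 1/(K+1) := le_trans (min_le_right _ _) (min_le_left _ _)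
  have hεD : ε ≤ 1/(2*D) := le_trans (min_le_right _ _) (min_le_right _ _)
  have hεK' : ε * (K+1) ≤ 1 := (le_div_iff₀ (by positivity)).mp hεK
  have hεD' : ε * (2*D) ≤ 1 := (le_div_iff₀ (by positivity)).mp hεD
  clear_value Mq D C₂ ε a
  have hDε : D * ε ≤ 1/2 := by nlinarith only [hεD']
  have hDε' : (Mq + 2*C₀ + 1) * ε ≤ 1/2 := by rw [hDdef] at hDε; exact hDε
  have hD1 : (1:ℝ) ≤ D := by rw [hDdef]; linarith [hMq0, hC₀.le]
  have hε1 : ε ≤ 1 := by nlinarith only [hDε, hD1, hεpos.le]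
  have hKε : K * ε ≤ 1 := by nlinarith only [hεK', hεpos.le]
  have ha1 : a ≤ 1 := hu.trans hε1
  have hKa : K * a ≤ 1 := by nlinarith only [hKε, hu, hK.le]
  have hKa2 : K * a^2 ≤ a := by nlinarith only [hKa, ha0]
  have hδa : ‖δ‖ ≤ a := hδ.trans hKa2
  have hδε : ‖δ‖ ≤ ε := hδa.trans hu
  have hδr : ‖δ‖ ≤ r := hδε.trans hεr
  -- bilinear norm bound
  have hΛb : ∀ x y : E, ‖Λ x y‖ ≤ Mq * ‖x‖ * ‖y‖ := by
    intro x y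
    rw [hMqdef]
    calc ‖Λ x y‖ ≤ ‖Λ x‖ * ‖y‖ := (Λ x).le_opNorm y
      _ ≤ (‖Λ‖ * ‖x‖) * ‖y‖ :=
          mul_le_mul_of_nonneg_right (Λ.le_opNorm x) (norm_nonneg y)
      _ = ‖Λ‖ * ‖x‖ * ‖y‖ := by ring
  -- the two remainder estimates
  have hky : ‖u - δ - w_y - (1/2:ℝ) • Λ w_y w_y‖ ≤ C₀ * (‖δ‖*‖w_y‖ + ‖w_y‖^3) := by
    have h := hkey δ w_y hδr (hwy.trans hεr)
    rw [hy] at h; exact h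
  have hkx : ‖-u - δ - w_x - (1/2:ℝ) • Λ w_x w_x‖ ≤ C₀ * (‖δ‖*‖w_x‖ + ‖w_x‖^3) := by
    have h := hkey δ w_x hδr (hwx.trans hεr)
    rw [hx] at h; exact h
  -- first-order bound on the inverse retractions
  have hsmall : ∀ v : E, ‖v‖ ≤ ε → ∀ t : E, ‖t‖ = a →
      ‖t - δ - v - (1/2:ℝ) • Λ v v‖ ≤ C₀ * (‖δ‖*‖v‖ + ‖v‖^3) → ‖v‖ ≤ 4*a := by
    intro v hv t ht hb
    have hvev : v = t - δ - (1/2:ℝ) • Λ v v - (t - δ - v - (1/2:ℝ) • Λ v v) := by module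
    have h1 : ‖v‖ ≤ ‖t‖ + ‖δ‖ + (1/2)*‖Λ v v‖ + ‖t - δ - v - (1/2:ℝ) • Λ v v‖ := by
      calc ‖v‖ = ‖t - δ - (1/2:ℝ) • Λ v v - (t - δ - v - (1/2:ℝ) • Λ v v)‖ := by rw [← hvev]
        _ ≤ ‖t - δ - (1/2:ℝ) • Λ v v‖ + ‖t - δ - v - (1/2:ℝ) • Λ v v‖ := norm_sub_le _ _
        _ ≤ ‖t - δ‖ + ‖(1/2:ℝ) • Λ v v‖ + ‖t - δ - v - (1/2:ℝ) • Λ v v‖ := by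
            have := norm_sub_le (t - δ) ((1/2:ℝ) • Λ v v); linarith
        _ ≤ ‖t‖ + ‖δ‖ + ‖(1/2:ℝ) • Λ v v‖ + ‖t - δ - v - (1/2:ℝ) • Λ v v‖ := by
            have := norm_sub_le t δ; linarith
        _ = ‖t‖ + ‖δ‖ + (1/2)*‖Λ v v‖ + ‖t - δ - v - (1/2:ℝ) • Λ v v‖ := by
            rw [norm_smul]; norm_num
    have q1 : ‖Λ v v‖ ≤ Mq * ε * ‖v‖ := by
      have h := hΛb v v
      nlinarith only [h, hv, mul_nonneg hMq0 (norm_nonneg v)]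
    have q2 : ‖δ‖ * ‖v‖ ≤ ε * ‖v‖ := mul_le_mul_of_nonneg_right hδε (norm_nonneg v)
    have e2 : ‖v‖^2 ≤ ε := by nlinarith only [hv, norm_nonneg v, hε1, hεpos.le]
    have q3 : ‖v‖^3 ≤ ε * ‖v‖ := by nlinarith only [e2, norm_nonneg v]
    have q4 : C₀ * (‖δ‖*‖v‖ + ‖v‖^3) ≤ C₀ * (ε*‖v‖ + ε*‖v‖) :=
      mul_le_mul_of_nonneg_left (add_le_add q2 q3) hC₀.le
    have q5 : (Mq/2 + 2*C₀) * ε ≤ 1/2 := by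
      nlinarith only [hDε', hεpos.le, hC₀.le, hMq0, mul_nonneg hMq0 hεpos.le]
    have q6 : (Mq/2 + 2*C₀) * ε * ‖v‖ ≤ (1/2) * ‖v‖ :=
      mul_le_mul_of_nonneg_right q5 (norm_nonneg v)
    rw [ht] at h1
    linarith [h1, hb, q1, q4, q6, hδa]
  have hy4 : ‖w_y‖ ≤ 4*a := hsmall w_y hwy u hadef.symm hky
  have hx4 : ‖w_x‖ ≤ 4*a := hsmall w_x hwx (-u) ((norm_neg u).trans hadef.symm) hkx
  -- bound on the sum w_y + w_x (second-order smallness of the midpoint defect)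
  have hpy : ‖u - δ - w_y - (1/2:ℝ) • Λ w_y w_y‖ ≤ C₀ * (4*K + 64) * a^3 := by
    calc ‖u - δ - w_y - (1/2:ℝ) • Λ w_y w_y‖ ≤ C₀ * (‖δ‖*‖w_y‖ + ‖w_y‖^3) := hky
      _ ≤ C₀ * ((K*a^2)*(4*a) + (4*a)^3) := by gcongr
      _ = C₀ * (4*K + 64) * a^3 := by ring
  have hpx : ‖-u - δ - w_x - (1/2:ℝ) • Λ w_x w_x‖ ≤ C₀ * (4*K + 64) * a^3 := by
    calc ‖-u - δ - w_x - (1/2:ℝ) • Λ w_x w_x‖ ≤ C₀ * (‖δ‖*‖w_x‖ + ‖w_x‖^3) := hkx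
      _ ≤ C₀ * ((K*a^2)*(4*a) + (4*a)^3) := by gcongr
      _ = C₀ * (4*K + 64) * a^3 := by ring
  have hΛyy : ‖Λ w_y w_y‖ ≤ 16*Mq*a^2 := by
    have h := hΛb w_y w_y
    have h2 : ‖w_y‖*‖w_y‖ ≤ (4*a)*(4*a) :=
      mul_le_mul hy4 hy4 (norm_nonneg _) (by positivity)
    nlinarith only [h, h2, hMq0]
  have hΛxx : ‖Λ w_x w_x‖ ≤ 16*Mq*a^2 := by
    have h := hΛb w_x w_x
    have h2 : ‖w_x‖*‖w_x‖ ≤ (4*a)*(4*a) :=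
      mul_le_mul hx4 hx4 (norm_nonneg _) (by positivity)
    nlinarith only [h, h2, hMq0]
  have hiden : w_y + w_x = -δ - δ - (1/2:ℝ) • Λ w_y w_y - (1/2:ℝ) • Λ w_x w_x
      - (u - δ - w_y - (1/2:ℝ) • Λ w_y w_y) - (-u - δ - w_x - (1/2:ℝ) • Λ w_x w_x) := by
    module
  have hsum : ‖w_y + w_x‖ ≤ C₂ * a^2 := by
    have h1 : ‖w_y + w_x‖ ≤ ‖δ‖ + ‖δ‖ + (1/2)*‖Λ w_y w_y‖ + (1/2)*‖Λ w_x w_x‖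
        + ‖u - δ - w_y - (1/2:ℝ) • Λ w_y w_y‖ + ‖-u - δ - w_x - (1/2:ℝ) • Λ w_x w_x‖ := by
      rw [hiden]
      have n1 := norm_sub_le (-δ - δ - (1/2:ℝ) • Λ w_y w_y - (1/2:ℝ) • Λ w_x w_x
        - (u - δ - w_y - (1/2:ℝ) • Λ w_y w_y)) (-u - δ - w_x - (1/2:ℝ) • Λ w_x w_x)
      have n2 := norm_sub_le (-δ - δ - (1/2:ℝ) • Λ w_y w_y - (1/2:ℝ) • Λ w_x w_x)
        (u - δ - w_y - (1/2:ℝ) • Λ w_y w_y)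
      have n3 := norm_sub_le (-δ - δ - (1/2:ℝ) • Λ w_y w_y) ((1/2:ℝ) • Λ w_x w_x)
      have n4 := norm_sub_le (-δ - δ) ((1/2:ℝ) • Λ w_y w_y)
      have n5 := norm_sub_le (-δ) δ
      have n6 : ‖(-δ : E)‖ = ‖δ‖ := norm_neg δ
      have n7 : ‖(1/2:ℝ) • Λ w_y w_y‖ = (1/2)*‖Λ w_y w_y‖ := by rw [norm_smul]; norm_num
      have n8 : ‖(1/2:ℝ) • Λ w_x w_x‖ = (1/2)*‖Λ w_x w_x‖ := by rw [norm_smul]; norm_num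
      linarith [n1, n2, n3, n4, n5, n6, n7, n8]
    have h2 : C₀ * (4*K + 64) * a^3 ≤ C₀ * (4*K + 64) * a^2 := by
      have h0 : a^3 ≤ a^2 := by nlinarith only [ha1, ha0, sq_nonneg a]
      have := mul_le_mul_of_nonneg_left h0 (show (0:ℝ) ≤ C₀ * (4*K + 64) by positivity)
      linarith
    calc ‖w_y + w_x‖ ≤ ‖δ‖ + ‖δ‖ + (1/2)*‖Λ w_y w_y‖ + (1/2)*‖Λ w_x w_x‖
        + ‖u - δ - w_y - (1/2:ℝ) • Λ w_y w_y‖ + ‖-u - δ - w_x - (1/2:ℝ) • Λ w_x w_x‖ := h1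
      _ ≤ K*a^2 + K*a^2 + (1/2)*(16*Mq*a^2) + (1/2)*(16*Mq*a^2)
          + C₀ * (4*K + 64) * a^2 + C₀ * (4*K + 64) * a^2 := by
        have e1 := hpy.trans h2
        have e2 := hpx.trans h2
        gcongr
      _ = C₂ * a^2 := by rw [hC₂def]; ring
  -- the cancellation identity
  have hΛdiff : Λ w_y w_y - Λ w_x w_x = Λ (w_y + w_x) (w_y - w_x) := by
    have h1 : Λ w_x w_y = Λ w_y w_x := hsym w_x w_y
    simp only [map_add, map_sub, ContinuousLinearMap.add_apply, ContinuousLinearMap.sub_apply,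
      ContinuousLinearMap.coe_sub', Pi.sub_apply]
    rw [h1]
    abel
  have hmain : (w_y - w_x) - (2:ℝ) • u
      = ((-u - δ - w_x - (1/2:ℝ) • Λ w_x w_x) - (u - δ - w_y - (1/2:ℝ) • Λ w_y w_y))
        - (1/2:ℝ) • (Λ (w_y + w_x) (w_y - w_x)) := by
    rw [← hΛdiff]
    module
  -- final estimate
  have hΛsum : ‖Λ (w_y + w_x) (w_y - w_x)‖ ≤ 8 * Mq * C₂ * a^3 := by
    have h1 := hΛb (w_y + w_x) (w_y - w_x)
    have h2 : ‖w_y - w_x‖ ≤ 8*a := by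
      have := norm_sub_le w_y w_x; linarith
    have e1 : ‖w_y + w_x‖*‖w_y - w_x‖ ≤ (C₂*a^2)*(8*a) :=
      mul_le_mul hsum h2 (norm_nonneg _) (by positivity)
    nlinarith only [h1, e1, hMq0]
  rw [hmain]
  have hfin1 : ‖((-u - δ - w_x - (1/2:ℝ) • Λ w_x w_x) - (u - δ - w_y - (1/2:ℝ) • Λ w_y w_y))
        - (1/2:ℝ) • (Λ (w_y + w_x) (w_y - w_x))‖
      ≤ ‖-u - δ - w_x - (1/2:ℝ) • Λ w_x w_x‖ + ‖u - δ - w_y - (1/2:ℝ) • Λ w_y w_y‖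
        + (1/2)*‖Λ (w_y + w_x) (w_y - w_x)‖ := by
    have n1 := norm_sub_le ((-u - δ - w_x - (1/2:ℝ) • Λ w_x w_x)
      - (u - δ - w_y - (1/2:ℝ) • Λ w_y w_y)) ((1/2:ℝ) • (Λ (w_y + w_x) (w_y - w_x)))
    have n2 := norm_sub_le (-u - δ - w_x - (1/2:ℝ) • Λ w_x w_x)
      (u - δ - w_y - (1/2:ℝ) • Λ w_y w_y)
    have n3 : ‖(1/2:ℝ) • (Λ (w_y + w_x) (w_y - w_x))‖
        = (1/2)*‖Λ (w_y + w_x) (w_y - w_x)‖ := by rw [norm_smul]; norm_num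
    rw [n3] at n1
    linarith
  refine hfin1.trans ?_
  have ha3 : (0:ℝ) ≤ a^3 := by positivity
  linarith [hpy, hpx, hΛsum, ha3]
end

section
/- Let F : E × E → E be a coordinate retraction family that is C² on a neighborhood of (0, 0). Then there exist constants C > 0 and ε > 0 such that for all z, w, p ∈ E with ‖z‖ ≤ ε, ‖w‖ ≤ ε, ‖p‖ ≤ ε and F(z, w) = p, one has ‖w − (p − z)‖ ≤ C(‖z‖ + ‖p − z‖)‖p − z‖. In particular, the inverse retraction satisfies the first-order expansion R⁻¹_z(p) = (p − z) + O(‖p − z‖²) when z = O(‖p − z‖). -/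
/-!
Let `A = DF(0,0)`. Since `DF` is Lipschitz near the origin, the mean value inequality along
the segment from `(z, 0)` to `(z, w)` gives `‖F(z,w) - F(z,0) - A(0,w)‖ ≤ K (‖z‖ + ‖w‖) ‖w‖`.
Here `F(z,0) = z` and `A(0,w) = w`, so `‖w - (p - z)‖ ≤ K (‖z‖ + ‖w‖) ‖w‖`; once
`K (‖z‖ + ‖w‖) ≤ 1/2` this forces `‖w‖ ≤ 2 ‖p - z‖`, and the bound follows.
-/

open Metric Filter Topology

section

variable {E E' G : Type*} [NormedAddCommGroup E] [NormedSpace ℝ E]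
  [NormedAddCommGroup E'] [NormedSpace ℝ E'] [NormedAddCommGroup G] [NormedSpace ℝ G]

theorem ContDiffAt.exists_norm_sub_sub_fderiv_le {f : E → G} {x₀ : E}
    (hf : ContDiffAt ℝ 2 f x₀) :
    ∃ K > 0, ∃ δ > 0, ∀ r ≤ δ, ∀ a ∈ closedBall x₀ r, ∀ b ∈ closedBall x₀ r,
      ‖f b - f a - fderiv ℝ f x₀ (b - a)‖ ≤ K * r * ‖b - a‖ := by
  obtain ⟨K, t, ht, hLip⟩ := (hf.fderiv_right (m := 1) (by norm_num)).exists_lipschitzOnWith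
  have hdiff : ∀ᶠ x in 𝓝 x₀, DifferentiableAt ℝ f x :=
    (hf.eventually (by simp)).mono fun x hx => hx.differentiableAt (by simp)
  obtain ⟨δ, hδ, hball⟩ := nhds_basis_closedBall.mem_iff.1 (inter_mem ht hdiff)
  refine ⟨K + 1, by positivity, δ, hδ, fun r hr a ha b hb => ?_⟩
  have hsub := (closedBall_subset_closedBall hr).trans hball
  refine (convex_closedBall x₀ r).norm_image_sub_le_of_norm_fderiv_le' (fun x hx => (hsub hx).2)
    (fun x hx => ?_) ha hb
  calc ‖fderiv ℝ f x - fderiv ℝ f x₀‖ ≤ K * ‖x - x₀‖ := by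
        simpa only [dist_eq_norm] using hLip.dist_le_mul x (hsub hx).1 x₀ (mem_of_mem_nhds ht)
    _ ≤ (K + 1) * r := by
        gcongr
        · linarith
        · exact mem_closedBall_iff_norm.1 hx

theorem fderiv_apply_inr_eq_fderiv_comp_prodMk {F : E × E' → G} {x : E} {y : E'}
    (hF : DifferentiableAt ℝ F (x, y)) (v : E') :
    fderiv ℝ F (x, y) (0, v) = fderiv ℝ (fun ζ => F (x, ζ)) y v := by
  have h : HasFDerivAt (fun ζ => F (x, ζ)) ((fderiv ℝ F (x, y)).comp
      (ContinuousLinearMap.inr ℝ E E')) y :=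
    hF.hasFDerivAt.comp y (hasFDerivAt_prodMk_right x y)
  rw [h.fderiv]
  rfl

theorem ContDiffAt.exists_norm_sub_sub_fderiv_inr_le {F : E × E' → G}
    (hF : ContDiffAt ℝ 2 F (0, 0)) :
    ∃ K > 0, ∃ δ > 0, ∀ z w, ‖z‖ ≤ δ → ‖w‖ ≤ δ →
      ‖F (z, w) - F (z, 0) - fderiv ℝ F (0, 0) (0, w)‖ ≤ K * (‖z‖ + ‖w‖) * ‖w‖ := by
  obtain ⟨K, hK, δ, hδ, hbound⟩ := hF.exists_norm_sub_sub_fderiv_le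
  refine ⟨K, hK, δ, hδ, fun z w hz hw => ?_⟩
  have h := hbound (max ‖z‖ ‖w‖) (max_le hz hw) (z, 0) (by simp [Prod.dist_eq])
    (z, w) (by simp [Prod.dist_eq])
  have hmax : max ‖z‖ ‖w‖ ≤ ‖z‖ + ‖w‖ := max_le_add_of_nonneg (norm_nonneg z) (norm_nonneg w)
  simp only [Prod.mk_sub_mk, sub_self, sub_zero, Prod.norm_def, norm_zero,
    max_eq_right (norm_nonneg w)] at h
  exact h.trans (by gcongr)

end

theorem norm_sub_le_of_norm_sub_le_mul_norm {E : Type*} [SeminormedAddCommGroup E] {u w : E}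
    {K a : ℝ} (hK : 0 ≤ K) (ha : 0 ≤ a)
    (h : ‖w - u‖ ≤ K * (a + ‖w‖) * ‖w‖) (hsmall : K * (a + ‖w‖) ≤ 1 / 2) :
    ‖w - u‖ ≤ 4 * K * (a + ‖u‖) * ‖u‖ := by
  have hw : ‖w‖ ≤ 2 * ‖u‖ := by
    have := norm_le_insert' w u
    nlinarith [norm_nonneg w, norm_nonneg (w - u)]
  calc ‖w - u‖ ≤ K * (a + ‖w‖) * ‖w‖ := h
    _ ≤ K * (a + 2 * ‖u‖) * (2 * ‖u‖) := by gcongr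
    _ ≤ 4 * K * (a + ‖u‖) * ‖u‖ := by nlinarith [norm_nonneg u, mul_nonneg hK ha]

theorem inverse_retraction_first_order_expansion_general
    {E : Type*} [NormedAddCommGroup E] [InnerProductSpace ℝ E]
    (F : E × E → E)
    (hF : ContDiffAt ℝ 2 F (0, 0))
    (hF0 : ∀ᶠ z in nhds (0 : E), F (z, 0) = z)
    (hFid : fderiv ℝ (fun ζ : E => F (0, ζ)) 0 = ContinuousLinearMap.id ℝ E) :
    ∃ C > 0, ∃ ε > 0, ∀ z w p : E, ‖z‖ ≤ ε → ‖w‖ ≤ ε → ‖p‖ ≤ ε → F (z, w) = p →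
      ‖w - (p - z)‖ ≤ C * (‖z‖ + ‖p - z‖) * ‖p - z‖ := by
  obtain ⟨K, hK, δ, hδ, hTaylor⟩ := hF.exists_norm_sub_sub_fderiv_inr_le
  obtain ⟨δ₀, hδ₀, hFz⟩ := nhds_basis_closedBall.eventually_iff.1 hF0
  have hA : ∀ w, fderiv ℝ F (0, 0) (0, w) = w := fun w => by
    rw [fderiv_apply_inr_eq_fderiv_comp_prodMk (hF.differentiableAt (by simp)), hFid]
    rfl
  refine ⟨4 * K, by positivity, min (min δ δ₀) (1 / (4 * K)), by positivity,
    fun z w p hz hw _ hzwp => ?_⟩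
  simp only [le_min_iff] at hz hw
  have hkey : ‖w - (p - z)‖ ≤ K * (‖z‖ + ‖w‖) * ‖w‖ := by
    have h := hTaylor z w hz.1.1 hw.1.1
    rwa [hzwp, hFz (mem_closedBall_zero_iff.2 hz.1.2), hA, ← norm_neg, neg_sub] at h
  have hsmall : K * (‖z‖ + ‖w‖) ≤ 1 / 2 := by
    have := mul_le_mul_of_nonneg_left (add_le_add hz.2 hw.2) hK.le
    field_simp at this ⊢
    linarith
  exact norm_sub_le_of_norm_sub_le_mul_norm hK.le (norm_nonneg z) hkey hsmall

/-- **First-order expansion of the inverse retraction.**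
If `F` is a coordinate retraction family that is `C²` near `(0, 0)` and `w` is the inverse
retraction of `p` at base point `z` (i.e. `F (z, w) = p`), then
`‖w - (p - z)‖ ≤ C (‖z‖ + ‖p - z‖) ‖p - z‖` for all small `z, w, p`. -/
theorem inverse_retraction_first_order_expansion
    {E : Type*} [NormedAddCommGroup E] [InnerProductSpace ℝ E] [FiniteDimensional ℝ E]
    (F : E × E → E)
    (hF : ContDiffAt ℝ 2 F (0, 0))
    (hF0 : ∀ᶠ z in nhds (0 : E), F (z, 0) = z)
    (hFid : fderiv ℝ (fun ζ : E => F (0, ζ)) 0 = ContinuousLinearMap.id ℝ E) :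
    ∃ C > 0, ∃ ε > 0, ∀ z w p : E, ‖z‖ ≤ ε → ‖w‖ ≤ ε → ‖p‖ ≤ ε → F (z, w) = p →
      ‖w - (p - z)‖ ≤ C * (‖z‖ + ‖p - z‖) * ‖p - z‖ :=
  inverse_retraction_first_order_expansion_general F hF hF0 hFid
end

section
/- Let F : E × E → E be a coordinate retraction family that is C² on a neighborhood of (0, 0). Then there exist constants C > 0 and ε > 0 such that for all u, v ∈ E with ‖u‖ ≤ ε, ‖v‖ ≤ ε and F(−u, v) = u, one has ‖v − 2u‖ ≤ C‖u‖². (That is, the tangent vector v obtained by pulling q_y back to the tangent space at q_x via the inverse retraction satisfies v = 2u + O(‖u‖²).) -/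
/-!
Since `F` is `C²`, its derivative is Lipschitz near `(0, 0)`, so the mean value inequality on the
segment from `(-u, 0)` to `(-u, v)` gives `‖F(-u, v) - F(-u, 0) - v‖ ≤ K max(‖u‖, ‖v‖) ‖v‖`.
With `F(-u, 0) = -u` and `F(-u, v) = u` this reads `‖v - 2u‖ ≤ K max(‖u‖, ‖v‖) ‖v‖`; for small
`u, v` it first forces `‖v‖ ≤ 3‖u‖`, and then `‖v - 2u‖ ≤ 9K‖u‖²`.
-/

open Metric Filter Topology
open scoped NNReal

section Calculus

variable {E : Type*} [NormedAddCommGroup E] [NormedSpace ℝ E]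
  {F : Type*} [NormedAddCommGroup F] [NormedSpace ℝ F]
  {G : Type*} [NormedAddCommGroup G] [NormedSpace ℝ G]

theorem ContDiffAt.exists_norm_image_sub_sub_fderiv_le {f : E → F} {x : E}
    (hf : ContDiffAt ℝ 2 f x) :
    ∃ K : ℝ≥0, ∃ δ > 0, ∀ r < δ, ∀ a ∈ closedBall x r, ∀ b ∈ closedBall x r,
      ‖f b - f a - fderiv ℝ f x (b - a)‖ ≤ K * r * ‖b - a‖ := by
  obtain ⟨K, t, ht, hlip⟩ := (hf.fderiv_right (m := 1) le_rfl).exists_lipschitzOnWith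
  have hdiff : ∀ᶠ y in 𝓝 x, DifferentiableAt ℝ f y :=
    (hf.eventually (by simp)).mono fun y hy => hy.differentiableAt (by simp)
  obtain ⟨δ, hδ, hball⟩ := Metric.mem_nhds_iff.mp (inter_mem ht hdiff)
  refine ⟨K, δ, hδ, fun r hr a ha b hb => ?_⟩
  have hsub : closedBall x r ⊆ t ∩ {y | DifferentiableAt ℝ f y} :=
    (closedBall_subset_ball hr).trans hball
  refine (convex_closedBall x r).norm_image_sub_le_of_norm_fderiv_le'
    (fun y hy => (hsub hy).2) (fun y hy => ?_) ha hb
  rw [← dist_eq_norm]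
  exact (hlip.dist_le_mul y (hsub hy).1 x (mem_of_mem_nhds ht)).trans (by gcongr; exact hy)

theorem DifferentiableAt.fderiv_comp_prodMk_right {f : E × F → G} {x : E} {y : F}
    (hf : DifferentiableAt ℝ f (x, y)) :
    fderiv ℝ (fun ζ => f (x, ζ)) y = (fderiv ℝ f (x, y)).comp (.inr ℝ E F) :=
  (hf.hasFDerivAt.comp y (hasFDerivAt_prodMk_right x y)).fderiv

end Calculus

theorem norm_le_three_mul_of_norm_sub_two_smul_le {E : Type*} [NormedAddCommGroup E]
    [NormedSpace ℝ E] {u v : E} (h : ‖v - (2 : ℝ) • u‖ ≤ ‖v‖ / 3) : ‖v‖ ≤ 3 * ‖u‖ := by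
  have := norm_sub_norm_le v ((2 : ℝ) • u)
  rw [norm_smul, Real.norm_two] at this
  linarith

theorem exists_norm_retraction_sub_add_le
    {E : Type*} [NormedAddCommGroup E] [NormedSpace ℝ E] {F : E × E → E}
    (hF : ContDiffAt ℝ 2 F (0, 0)) (hF0 : ∀ᶠ z in 𝓝 0, F (z, 0) = z)
    (hFid : fderiv ℝ (fun ζ => F (0, ζ)) 0 = .id ℝ E) :
    ∃ K : ℝ≥0, ∃ δ > 0, ∀ z v : E, ‖z‖ < δ → ‖v‖ < δ →
      ‖F (z, v) - (z + v)‖ ≤ K * max ‖z‖ ‖v‖ * ‖v‖ := by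
  obtain ⟨K, δ₁, hδ₁, hTaylor⟩ := hF.exists_norm_image_sub_sub_fderiv_le
  obtain ⟨δ₀, hδ₀, hF0⟩ := eventually_nhds_iff_ball.mp hF0
  have hpartial : ∀ v : E, fderiv ℝ F (0, 0) (0, v) = v := fun v => by
    simpa [hFid] using congr($((hF.differentiableAt (by simp)).fderiv_comp_prodMk_right) v).symm
  refine ⟨K, min δ₀ δ₁, lt_min hδ₀ hδ₁, fun z v hz hv => ?_⟩
  set r := max ‖z‖ ‖v‖
  have hr : r < min δ₀ δ₁ := max_lt hz hv
  have hmem : ∀ w : E, ‖w‖ ≤ r → ((z, w) : E × E) ∈ closedBall 0 r := fun w hw => by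
    rw [mem_closedBall_zero_iff, Prod.norm_def]
    exact max_le (le_max_left _ _) hw
  have := hTaylor r (hr.trans_le (min_le_right _ _)) (z, 0) (hmem 0 (by simp [r]))
    (z, v) (hmem v (le_max_right _ _))
  rwa [hF0 z (by simpa using hz.trans_le (min_le_left _ _)), Prod.mk_sub_mk, sub_self,
    sub_zero, hpartial, sub_sub, show ‖((0 : E), v)‖ = ‖v‖ by simp [Prod.norm_def]] at this

theorem inverse_retraction_at_endpoint_second_order_general
    {E : Type*} [NormedAddCommGroup E] [InnerProductSpace ℝ E]
    (F : E × E → E)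
    (hF : ContDiffAt ℝ 2 F (0, 0))
    (hF0 : ∀ᶠ z in nhds (0 : E), F (z, 0) = z)
    (hFid : fderiv ℝ (fun ζ : E => F (0, ζ)) 0 = ContinuousLinearMap.id ℝ E) :
    ∃ C > 0, ∃ ε > 0, ∀ u v : E, ‖u‖ ≤ ε → ‖v‖ ≤ ε → F (-u, v) = u →
      ‖v - (2 : ℝ) • u‖ ≤ C * ‖u‖ ^ 2 := by
  obtain ⟨K, δ, hδ, hF'⟩ := exists_norm_retraction_sub_add_le hF hF0 hFid
  set ε := min (δ / 2) (1 / (3 * K + 1))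
  refine ⟨9 * K + 1, by positivity, ε, by positivity, fun u v hu hv huv => ?_⟩
  set r := max ‖u‖ ‖v‖
  have hrε : r ≤ ε := max_le hu hv
  have hKr : K * r ≤ 1 / 3 := by
    calc K * r ≤ K * (1 / (3 * K + 1)) := by gcongr; exact hrε.trans (min_le_right _ _)
      _ ≤ 1 / 3 := by rw [mul_one_div, div_le_div_iff₀ (by positivity) (by norm_num)]; linarith
  have hkey : ‖v - (2 : ℝ) • u‖ ≤ K * r * ‖v‖ := by
    have hδ' : ε < δ := (min_le_left _ _).trans_lt (half_lt_self hδ)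
    have := hF' (-u) v (by simpa using hu.trans_lt hδ') (hv.trans_lt hδ')
    rwa [huv, norm_neg, ← norm_neg, show -(u - (-u + v)) = v - (2 : ℝ) • u by module] at this
  have hv3 : ‖v‖ ≤ 3 * ‖u‖ := norm_le_three_mul_of_norm_sub_two_smul_le <|
    hkey.trans (by nlinarith [norm_nonneg v])
  have hr3 : r ≤ 3 * ‖u‖ := max_le (by linarith [norm_nonneg u]) hv3
  calc ‖v - (2 : ℝ) • u‖ ≤ K * r * ‖v‖ := hkey
    _ ≤ K * (3 * ‖u‖) * (3 * ‖u‖) := by gcongr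
    _ ≤ (9 * K + 1) * ‖u‖ ^ 2 := by nlinarith [sq_nonneg ‖u‖]

/-- **The pulled-back tangent vector `v = R⁻¹_{q_x}(q_y)` satisfies `v = 2u + O(‖u‖²)`.**
In Riemann normal coordinates centred at the geodesic midpoint, the configurations `q_x, q_y`
have coordinates `-u, u`.  If `F` is a coordinate retraction family that is `C²` near `(0, 0)`
and `F (-u, v) = u` (i.e. `v` is the inverse retraction of `q_y` at `q_x`), then
`‖v - 2u‖ ≤ C ‖u‖²` for all small `u, v`. -/
theorem inverse_retraction_at_endpoint_second_order
    {E : Type*} [NormedAddCommGroup E] [InnerProductSpace ℝ E] [FiniteDimensional ℝ E]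
    (F : E × E → E)
    (hF : ContDiffAt ℝ 2 F (0, 0))
    (hF0 : ∀ᶠ z in nhds (0 : E), F (z, 0) = z)
    (hFid : fderiv ℝ (fun ζ : E => F (0, ζ)) 0 = ContinuousLinearMap.id ℝ E) :
    ∃ C > 0, ∃ ε > 0, ∀ u v : E, ‖u‖ ≤ ε → ‖v‖ ≤ ε → F (-u, v) = u →
      ‖v - (2 : ℝ) • u‖ ≤ C * ‖u‖ ^ 2 :=
  inverse_retraction_at_endpoint_second_order_general F hF hF0 hFid
end
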